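/- A DATE D is equivalent to its reachability-reduced counterpart reach(D) with respect to any set of ground traces: for every T ⊆ Σ*, D ≅_T reach(D). -/

import Mathlib

open Classical

/-- A property automaton over states `Q` and alphabet `E`: a deterministic and
total transition relation is represented as a transition function. -/
structure PA (Q : Type*) (E : Type*) where
  init : Q
  bad : Set Q
  next : Q → E → Q

namespace PA

variable {Q E : Type*}

/-- Iterated application of the transition function along a ground trace. -/
def run (π : PA Q E) (q : Q) (t : List E) : Q := t.foldl π.next q

/-- A ground trace satisfies a property automaton iff no prefix of it leads
from the initial state to a bad state. -/
def Sat (t : List E) (π : PA Q E) : Prop :=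
  ∀ t' : List E, t' <+: t → π.run π.init t' ∉ π.bad

/-- Equivalence of two property automata with respect to a set of ground traces. -/
def EquivOn (T : Set (List E)) (π π' : PA Q E) : Prop :=
  ∀ t ∈ T, Sat t π ↔ Sat t π'

end PA

/-- A static program: a set of static parametrised traces over identifiers `α`,
together with a must-alias equivalence relation and a may-alias relation. -/
structure SProg (α : Type*) (E : Type*) where
  traces : Set (List (α × E))
  must : α → α → Prop
  may : α → α → Prop
  must_equiv : Equivalence must
  must_sub_may : ∀ {x y : α}, must x y → may x y

namespace SProg

variable {α E : Type*}

-- Projection of a static parametrised trace onto an identifier `x`,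
-- yielding the set of possible ground traces.
open Classical in
noncomputable def proj (P : SProg α E) (x : α) : List (α × E) → Set (List E)
  | [] => {[]}
  | (x', e) :: st =>
      if P.must x x' then (e :: ·) '' P.proj x st
      else if P.may x x' then P.proj x st ∪ (e :: ·) '' P.proj x st
      else P.proj x st

/-- The projection of a static program onto a single identifier. -/
def projId (P : SProg α E) (x : α) : Set (List E) :=
  {t | ∃ st ∈ P.traces, t ∈ P.proj x st}

/-- The projection of a static program onto all identifiers (`P ⇓ OId`). -/
def projAll (P : SProg α E) : Set (List E) :=
  {t | ∃ st ∈ P.traces, ∃ x : α, t ∈ P.proj x st}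

end SProg

/-- Satisfaction of a property automaton by a static parametrised trace:
every projection onto every identifier satisfies the automaton. -/
def PA.SSat {α Q E : Type*} (P : SProg α E) (st : List (α × E)) (π : PA Q E) : Prop :=
  ∀ x : α, ∀ t ∈ P.proj x st, PA.Sat t π

/-- Equivalence of two property automata with respect to a static program. -/
def PA.SEquiv {α Q E : Type*} (P : SProg α E) (π π' : PA Q E) : Prop :=
  ∀ st ∈ P.traces, PA.SSat P st π ↔ PA.SSat P st π'

/-- A transition of a DATE: source state, event, condition, action, target state. -/
structure DTrans (Q : Type*) (E : Type*) (Θ : Type*) where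
  src : Q
  ev : E
  cond : Θ → Bool
  act : Θ → Θ
  tgt : Q

/-- A DATE (without timers/channels): states `Q`, events `E`, monitoring
variable states `Θ`, initial state, initial monitoring state, bad states,
and a transition relation. -/
structure DATE (Q : Type*) (E : Type*) (Θ : Type*) where
  init : Q
  th0 : Θ
  bad : Set Q
  delta : Set (DTrans Q E Θ)

namespace DATE

variable {Q E Θ : Type*}

/-- Determinism: from each state, any two distinct transitions with the same
event have conditions that are never simultaneously true. -/
def Deterministic (D : DATE Q E Θ) : Prop :=
  ∀ d ∈ D.delta, ∀ d' ∈ D.delta,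
    d.src = d'.src → d.ev = d'.ev → d ≠ d' →
      ∀ θ : Θ, ¬(d.cond θ = true ∧ d'.cond θ = true)

/-- The concrete transition function `Δ`. -/
noncomputable def step (D : DATE Q E Θ) (s : Q × Θ) (e : E) : Q × Θ :=
  if h : ∃ d ∈ D.delta, d.src = s.1 ∧ d.ev = e ∧ d.cond s.2 = true
  then (h.choose.tgt, h.choose.act s.2)
  else s

/-- `Δ*`: iterated concrete transition function along a ground trace. -/
noncomputable def run (D : DATE Q E Θ) (s : Q × Θ) (t : List E) : Q × Θ :=
  t.foldl D.step s

/-- A ground trace satisfies a DATE iff no prefix of it drives `Δ*` from the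
initial configuration into a bad state. -/
def Sat (t : List E) (D : DATE Q E Θ) : Prop :=
  ∀ t' : List E, t' <+: t → (D.run (D.init, D.th0) t').1 ∉ D.bad

/-- Equivalence of two DATEs with respect to a set of ground traces. -/
def EquivOn (T : Set (List E)) (D D' : DATE Q E Θ) : Prop :=
  ∀ t ∈ T, Sat t D ↔ Sat t D'

/-- The static transition relation `q →e_approx q'`. -/
def ApproxStep (D : DATE Q E Θ) (q : Q) (e : E) (q' : Q) : Prop :=
  (∃ d ∈ D.delta, d.src = q ∧ d.ev = e ∧ d.tgt = q' ∧ ¬ ∀ θ : Θ, d.cond θ = false)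
  ∨ (q' = q ∧ ¬ ∃ d ∈ D.delta, d.src = q ∧ d.ev = e ∧ d.tgt ≠ q ∧ ∀ θ : Θ, d.cond θ = true)

/-- The static transition function on sets of states. -/
def approxSet (D : DATE Q E Θ) (S : Set Q) (e : E) : Set Q :=
  {q' | ∃ q ∈ S, D.ApproxStep q e q'}

/-- `approxΔ*`: iterated static transition function along a ground trace. -/
def approxRun (D : DATE Q E Θ) (S : Set Q) (t : List E) : Set Q :=
  t.foldl D.approxSet S

/-- `q ↪ q'`: `q'` is reachable from `q` via the static transition relation. -/
def Reach (D : DATE Q E Θ) (q q' : Q) : Prop :=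
  ∃ t : List E, q' ∈ D.approxRun {q} t

/-- `badAfter(q)`: `q` is reachable from the initial state and can reach a bad state. -/
def BadAfter (D : DATE Q E Θ) (q : Q) : Prop :=
  D.Reach D.init q ∧ ∃ q' ∈ D.bad, D.Reach q q'

/-- `goodEntryPoint(q)`. -/
def GoodEntryPoint (D : DATE Q E Θ) (q : Q) : Prop :=
  ¬ D.BadAfter q ∧ ∃ q' : Q, ∃ e : E, D.BadAfter q' ∧ D.ApproxStep q' e q

/-- `useful(q)`. -/
def Useful (D : DATE Q E Θ) (q : Q) : Prop :=
  D.BadAfter q ∨ D.GoodEntryPoint q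

/-- Restriction of a DATE to a set of transitions (`D ↾ δ'`). -/
def restrict (D : DATE Q E Θ) (δ' : Set (DTrans Q E Θ)) : DATE Q E Θ :=
  { D with delta := D.delta ∩ δ' }

/-- The reachability-reduced DATE `reach(D)`: only useful states and
transitions between useful states are kept. -/
def reachReduce (D : DATE Q E Θ) : DATE Q E Θ :=
  D.restrict {d | D.Useful d.src ∧ D.Useful d.tgt}

/-- Alphabet restriction `D ↾ Σ'`. -/
def alphaRestrict (D : DATE Q E Θ) (A : Set E) : DATE Q E Θ :=
  D.restrict {d | d.ev ∈ A}

/-- `Σ(T)`: the set of events occurring in some trace of `T`. -/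
def eventsOf (T : Set (List E)) : Set E :=
  {e | ∃ t ∈ T, e ∈ t}

/-- Component-wise union of two DATEs (sharing initial state and initial
monitoring state). -/
def union (D₁ D₂ : DATE Q E Θ) : DATE Q E Θ :=
  { init := D₁.init, th0 := D₁.th0, bad := D₁.bad ∪ D₂.bad,
    delta := D₁.delta ∪ D₂.delta }

/-- Component-wise union of a family of DATEs, with given initial state and
initial monitoring state. -/
def unionFamily {ι : Type*} (q0 : Q) (θ0 : Θ) (f : ι → DATE Q E Θ) : DATE Q E Θ :=
  { init := q0, th0 := θ0, bad := ⋃ i, (f i).bad, delta := ⋃ i, (f i).delta }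

/-- A ground trace `t` uses a transition `d`. -/
def Uses (D : DATE Q E Θ) (t : List E) (d : DTrans Q E Θ) : Prop :=
  (¬ ∀ θ : Θ, d.cond θ = false) ∧
    ∃ t' : List E, (t' ++ [d.ev]) <+: t ∧ d.src ∈ D.approxRun {D.init} t'

/-- Satisfaction of a DATE by a static parametrised trace. -/
def SSat {α : Type*} (P : SProg α E) (st : List (α × E)) (D : DATE Q E Θ) : Prop :=
  ∀ x : α, ∀ t ∈ P.proj x st, Sat t D

/-- Equivalence of two DATEs with respect to a static program. -/
def SEquiv {α : Type*} (P : SProg α E) (D D' : DATE Q E Θ) : Prop :=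
  ∀ st ∈ P.traces, SSat P st D ↔ SSat P st D'

end DATE

/-- Translation of a property automaton into a DATE with `Θ = Unit`:
each transition `(q, e, q')` becomes `q —e|true↦skip→ q'`. -/
def PA.toDATE {Q E : Type*} (π : PA Q E) : DATE Q E Unit :=
  { init := π.init, th0 := (), bad := π.bad,
    delta := {d | d.cond = (fun _ => true) ∧ d.act = id ∧ d.tgt = π.next d.src d.ev} }

/-- The flow-sensitive residual `residual₂(D, P)`. -/
def DATE.residual2 {α Q E Θ : Type*} (D : DATE Q E Θ) (P : SProg α E) : DATE Q E Θ :=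
  (D.restrict {d | ∃ t ∈ P.projAll, D.Uses t d}).reachReduce

/-- Consecutive application of the flow-sensitive residual over a list of
static program over-approximations. -/
def DATE.residual2List {α Q E Θ : Type*} (D : DATE Q E Θ) :
    List (SProg α E) → DATE Q E Θ
  | [] => D
  | P :: Ps => DATE.residual2List (D.residual2 P) Ps


/-! Run `D` and `reach(D)` side by side from the initial configuration. While the current state
can still lead to a violation, the transition that fires leaves a `badAfter` state, so both its
ends are useful; it is kept in `reach(D)` and, by determinism, both runs take it. If instead a
dropped transition fires, its source cannot lead to a violation, and from then on both runs only
follow static transitions of `D` or stand still, so neither can reach a bad state. -/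

namespace DATE

variable {Q E Θ : Type*}

lemma approxRun_append (D : DATE Q E Θ) (S : Set Q) (t t' : List E) :
    D.approxRun S (t ++ t') = D.approxRun (D.approxRun S t) t' :=
  List.foldl_append

lemma approxRun_mono (D : DATE Q E Θ) (t : List E) {S S' : Set Q} (h : S ⊆ S') :
    D.approxRun S t ⊆ D.approxRun S' t := by
  induction t generalizing S S' with
  | nil => exact h
  | cons e t ih => exact ih fun q' ⟨q, hq, hstep⟩ => ⟨q, h hq, hstep⟩

lemma reach_refl (D : DATE Q E Θ) (q : Q) : D.Reach q q :=
  ⟨[], rfl⟩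

lemma Reach.trans {D : DATE Q E Θ} {q q' q'' : Q} (h₁ : D.Reach q q') (h₂ : D.Reach q' q'') :
    D.Reach q q'' := by
  obtain ⟨t₁, h₁⟩ := h₁
  obtain ⟨t₂, h₂⟩ := h₂
  refine ⟨t₁ ++ t₂, ?_⟩
  rw [approxRun_append]
  exact approxRun_mono D t₂ (Set.singleton_subset_iff.mpr h₁) h₂

lemma ApproxStep.reach {D : DATE Q E Θ} {q q' : Q} {e : E} (h : D.ApproxStep q e q') :
    D.Reach q q' :=
  ⟨[e], ⟨q, rfl, h⟩⟩

lemma approxStep_of_mem {D : DATE Q E Θ} {d : DTrans Q E Θ} (hd : d ∈ D.delta) {θ : Θ}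
    (hcond : d.cond θ = true) : D.ApproxStep d.src d.ev d.tgt :=
  Or.inl ⟨d, hd, rfl, rfl, rfl, fun hfalse => by simp [hfalse θ] at hcond⟩

lemma ApproxStep.of_restrict {D : DATE Q E Θ} {S : Set (DTrans Q E Θ)} {q q' : Q} {e : E}
    (h : (D.restrict S).ApproxStep q e q') : q' = q ∨ D.ApproxStep q e q' := by
  rcases h with ⟨d, hd, hfires⟩ | ⟨rfl, -⟩
  · exact Or.inr (Or.inl ⟨d, hd.1, hfires⟩)
  · exact Or.inl rfl

lemma step_of_not_exists {D : DATE Q E Θ} {s : Q × Θ} {e : E}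
    (h : ¬ ∃ d ∈ D.delta, d.src = s.1 ∧ d.ev = e ∧ d.cond s.2 = true) :
    D.step s e = s :=
  dif_neg h

lemma step_eq_of_mem {D : DATE Q E Θ} (hdet : D.Deterministic) {d : DTrans Q E Θ}
    {s : Q × Θ} {e : E} (hd : d ∈ D.delta) (hsrc : d.src = s.1) (hev : d.ev = e)
    (hcond : d.cond s.2 = true) : D.step s e = (d.tgt, d.act s.2) := by
  have h : ∃ d ∈ D.delta, d.src = s.1 ∧ d.ev = e ∧ d.cond s.2 = true :=
    ⟨d, hd, hsrc, hev, hcond⟩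
  obtain ⟨hmem, hsrc', hev', hcond'⟩ := h.choose_spec
  have hchoose : h.choose = d := by
    by_contra hne
    exact hdet _ hmem d hd (hsrc'.trans hsrc.symm) (hev'.trans hev.symm) hne s.2 ⟨hcond', hcond⟩
  rw [step, dif_pos h, hchoose]

lemma approxStep_step (D : DATE Q E Θ) (s : Q × Θ) (e : E) :
    D.ApproxStep s.1 e (D.step s e).1 := by
  by_cases h : ∃ d ∈ D.delta, d.src = s.1 ∧ d.ev = e ∧ d.cond s.2 = true
  · obtain ⟨hmem, hsrc, hev, hcond⟩ := h.choose_spec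
    rw [step, dif_pos h]
    simpa only [hsrc, hev] using approxStep_of_mem hmem hcond
  · rw [step_of_not_exists h]
    exact Or.inr ⟨rfl, fun ⟨d, hd, hsrc, hev, _, htrue⟩ => h ⟨d, hd, hsrc, hev, htrue s.2⟩⟩

lemma Deterministic.restrict {D : DATE Q E Θ} (hdet : D.Deterministic) (S : Set (DTrans Q E Θ)) :
    (D.restrict S).Deterministic :=
  fun d hd d' hd' => hdet d hd.1 d' hd'.1

lemma step_eq_restrict_step_or {D : DATE Q E Θ} (hdet : D.Deterministic)
    (S : Set (DTrans Q E Θ)) (s : Q × Θ) (e : E) :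
    D.step s e = (D.restrict S).step s e ∨
      ∃ d ∈ D.delta, d ∉ S ∧ d.src = s.1 ∧ d.ev = e ∧ d.cond s.2 = true := by
  by_cases h : ∃ d ∈ D.delta, d.src = s.1 ∧ d.ev = e ∧ d.cond s.2 = true
  · obtain ⟨d, hd, hsrc, hev, hcond⟩ := h
    by_cases hdS : d ∈ S
    · left
      rw [step_eq_of_mem hdet hd hsrc hev hcond,
        step_eq_of_mem (hdet.restrict S) ⟨hd, hdS⟩ hsrc hev hcond]
    · exact Or.inr ⟨d, hd, hdS, hsrc, hev, hcond⟩
  · left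
    rw [step_of_not_exists h, step_of_not_exists fun ⟨d, hd, hfires⟩ => h ⟨d, hd.1, hfires⟩]

def Harmless (D : DATE Q E Θ) (q : Q) : Prop :=
  D.Reach D.init q ∧ ¬ D.BadAfter q

lemma Harmless.not_mem_bad {D : DATE Q E Θ} {q : Q} (h : D.Harmless q) : q ∉ D.bad :=
  fun hq => h.2 ⟨h.1, q, hq, reach_refl D q⟩

lemma Harmless.approxStep {D : DATE Q E Θ} {q q' : Q} {e : E} (h : D.Harmless q)
    (hstep : D.ApproxStep q e q') : D.Harmless q' :=
  ⟨h.1.trans hstep.reach, fun ⟨_, qb, hqb, hreach⟩ => h.2 ⟨h.1, qb, hqb, hstep.reach.trans hreach⟩⟩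

lemma Harmless.restrict_step {D : DATE Q E Θ} (S : Set (DTrans Q E Θ)) {r : Q × Θ} (e : E)
    (h : D.Harmless r.1) : D.Harmless ((D.restrict S).step r e).1 := by
  rcases ((D.restrict S).approxStep_step r e).of_restrict with heq | hstep
  · rwa [heq]
  · exact h.approxStep hstep

def Agree (D : DATE Q E Θ) (s r : Q × Θ) : Prop :=
  (s = r ∧ D.Reach D.init s.1) ∨ (D.Harmless s.1 ∧ D.Harmless r.1)

lemma Agree.fst_mem_bad_iff {D : DATE Q E Θ} {s r : Q × Θ} (h : D.Agree s r) :
    s.1 ∈ D.bad ↔ r.1 ∈ D.bad := by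
  rcases h with ⟨rfl, -⟩ | ⟨hs, hr⟩
  · rfl
  · exact iff_of_false hs.not_mem_bad hr.not_mem_bad

section Restrict

variable {D : DATE Q E Θ} {S : Set (DTrans Q E Θ)}

lemma Agree.step (hdet : D.Deterministic)
    (hS : ∀ d ∈ D.delta, ∀ θ, d.cond θ = true → D.BadAfter d.src → d ∈ S)
    {s r : Q × Θ} (h : D.Agree s r) (e : E) :
    D.Agree (D.step s e) ((D.restrict S).step r e) := by
  rcases h with ⟨rfl, hreach⟩ | ⟨hs, hr⟩
  · rcases step_eq_restrict_step_or hdet S s e with heq | ⟨d, hd, hdS, hsrc, -, hcond⟩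
    · exact Or.inl ⟨heq, hreach.trans (D.approxStep_step s e).reach⟩
    · have hs : D.Harmless s.1 := ⟨hreach, fun hbad => hdS (hS d hd _ hcond (hsrc ▸ hbad))⟩
      exact Or.inr ⟨hs.approxStep (D.approxStep_step s e), hs.restrict_step S e⟩
  · exact Or.inr ⟨hs.approxStep (D.approxStep_step s e), hr.restrict_step S e⟩

lemma Agree.run (hdet : D.Deterministic)
    (hS : ∀ d ∈ D.delta, ∀ θ, d.cond θ = true → D.BadAfter d.src → d ∈ S)
    (t : List E) {s r : Q × Θ} (h : D.Agree s r) :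
    D.Agree (D.run s t) ((D.restrict S).run r t) := by
  induction t generalizing s r with
  | nil => exact h
  | cons e t ih => exact ih (h.step hdet hS e)

theorem restrict_equivOn (hdet : D.Deterministic)
    (hS : ∀ d ∈ D.delta, ∀ θ, d.cond θ = true → D.BadAfter d.src → d ∈ S)
    (T : Set (List E)) : D.EquivOn T (D.restrict S) := by
  intro t _
  have hagree (p : List E) :=
    Agree.run hdet hS p (Or.inl ⟨rfl, reach_refl D D.init⟩ : D.Agree (D.init, D.th0) _)
  exact forall₂_congr fun p _ => (hagree p).fst_mem_bad_iff.not

end Restrict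

lemma useful_src_and_tgt_of_badAfter {D : DATE Q E Θ} {d : DTrans Q E Θ} (hd : d ∈ D.delta) {θ : Θ}
    (hcond : d.cond θ = true) (hsrc : D.BadAfter d.src) : D.Useful d.src ∧ D.Useful d.tgt := by
  refine ⟨Or.inl hsrc, ?_⟩
  by_cases htgt : D.BadAfter d.tgt
  · exact Or.inl htgt
  · exact Or.inr ⟨htgt, d.src, d.ev, hsrc, approxStep_of_mem hd hcond⟩

end DATE

/-- A DATE is equivalent to its reachability-reduced counterpart
with respect to any set of ground traces. -/
theorem reachReduce_equiv {Q E Θ : Type*} (D : DATE Q E Θ)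
    (hdet : D.Deterministic) :
    ∀ T : Set (List E), DATE.EquivOn T D D.reachReduce :=
  DATE.restrict_equivOn hdet fun _ hd _ hcond hsrc => DATE.useful_src_and_tgt_of_badAfter hd hcond hsrc
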